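/- If h is a function in PCSF and R is a relation in PCSF, then both the bounded union over R, f(x,ȳ/ā) = ⋃{h(z,ȳ/ā) : z∈x and R(z,ȳ/ā)}, and the bounded replacement over R, g(x,ȳ/ā) = {h(z,ȳ/ā) : z∈x and R(z,ȳ/ā)}, are in PCSF. -/

import Mathlib

open scoped Classical

noncomputable section

namespace PCSFPaper

/-! ## Basic ZF-set helpers -/

/-- Image `{f z : z ∈ x}` of a ZF-set under an arbitrary class function. -/
noncomputable def zImage (f : ZFSet → ZFSet) (x : ZFSet) : ZFSet :=
  @ZFSet.image f (Classical.allZFSetDefinable fun s => f (s 0)) x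

/-- Kuratowski ordered pair `⟨c,d⟩ = {{c},{c,d}}`. -/
def kpair (c d : ZFSet) : ZFSet := {{c}, {c, d}}

/-! ## Δ₀ formulas of the language of set theory -/

/-- Δ₀ (bounded) formulas in the first-order language of set theory,
with `k` free variables.  In the bounded quantifiers `ball i φ`/`bex i φ`
the newly bound variable (ranging over the elements of variable `i`)
becomes variable `0` of `φ`, the old variables being shifted up by one. -/
inductive D0 : ℕ → Type
  | mem {k : ℕ} (i j : Fin k) : D0 k
  | eq {k : ℕ} (i j : Fin k) : D0 k
  | not {k : ℕ} : D0 k → D0 k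
  | and {k : ℕ} : D0 k → D0 k → D0 k
  | or {k : ℕ} : D0 k → D0 k → D0 k
  | ball {k : ℕ} (i : Fin k) : D0 (k + 1) → D0 k
  | bex {k : ℕ} (i : Fin k) : D0 (k + 1) → D0 k

/-- Satisfaction of Δ₀ formulas in the universe of ZF-sets. -/
def D0.Sat : ∀ {k : ℕ}, D0 k → (Fin k → ZFSet) → Prop
  | _, .mem i j, v => v i ∈ v j
  | _, .eq i j, v => v i = v j
  | _, .not φ, v => ¬ φ.Sat v
  | _, .and φ ψ, v => φ.Sat v ∧ ψ.Sat v
  | _, .or φ ψ, v => φ.Sat v ∨ ψ.Sat v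
  | _, .ball i φ, v => ∀ z ∈ v i, φ.Sat (Fin.cons z v)
  | _, .bex i φ, v => ∃ z ∈ v i, φ.Sat (Fin.cons z v)

/-- A `k`-ary relation on sets is Δ₀ iff it is defined by some Δ₀ formula. -/
def IsDelta0 {k : ℕ} (R : (Fin k → ZFSet) → Prop) : Prop :=
  ∃ φ : D0 k, ∀ v, R v ↔ φ.Sat v

/-! ## The classes PCSF⁻ and PCSF -/

/-- The class `PCSF⁻` of predicatively computable set functions taking only
safe arguments: generated from projections, pairing, null, union and the
membership conditional, by composition and safe separation. -/
inductive PCSFminus : ∀ m : ℕ, ((Fin m → ZFSet) → ZFSet) → Prop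
  | proj {m : ℕ} (j : Fin m) : PCSFminus m fun a => a j
  | pair : PCSFminus 2 fun a => {a 0, a 1}
  | null : PCSFminus 0 fun _ => ∅
  | union : PCSFminus 1 fun a => ZFSet.sUnion (a 0)
  | cond : PCSFminus 4 fun a => if a 2 ∈ a 3 then a 0 else a 1
  | comp {m k : ℕ} (h : (Fin k → ZFSet) → ZFSet) (t : Fin k → (Fin m → ZFSet) → ZFSet) :
      PCSFminus k h → (∀ i, PCSFminus m (t i)) →
      PCSFminus m fun a => h fun i => t i a
  | sep {m : ℕ} (h : (Fin (m + 1) → ZFSet) → ZFSet) :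
      PCSFminus (m + 1) h →
      PCSFminus (m + 1) fun a =>
        ZFSet.sep (fun b => h (Fin.snoc (Fin.init a) b) ≠ ∅) (a (Fin.last m))

/-- The class `PCSF` of predicatively computable set functions, with `n` normal
and `m` safe arguments: generated from `PCSF⁻` (whose arguments are all safe)
and projections by safe composition and predicative set recursion.  The
recursion rule is stated via its defining equation (which determines the
function uniquely, by ∈-induction); the recursion argument `x` is the first
normal argument, and the set `{f(z,ȳ/ā) : z ∈ x}` of previous values is passed
to `h` as a last, safe, argument. -/
inductive PCSF : ∀ n m : ℕ, ((Fin n → ZFSet) → (Fin m → ZFSet) → ZFSet) → Prop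
  | ofMinus {m : ℕ} (h : (Fin m → ZFSet) → ZFSet) :
      PCSFminus m h → PCSF 0 m fun _ a => h a
  | proj {n m : ℕ} (j : Fin (n + m)) : PCSF n m fun x a => Fin.append x a j
  | comp {n m k l : ℕ} (h : (Fin k → ZFSet) → (Fin l → ZFSet) → ZFSet)
      (r : Fin k → (Fin n → ZFSet) → (Fin 0 → ZFSet) → ZFSet)
      (t : Fin l → (Fin n → ZFSet) → (Fin m → ZFSet) → ZFSet) :
      PCSF k l h → (∀ i, PCSF n 0 (r i)) → (∀ i, PCSF n m (t i)) →
      PCSF n m fun x a => h (fun i => r i x Fin.elim0) fun i => t i x a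
  | recur {n m : ℕ} (h : (Fin (n + 1) → ZFSet) → (Fin (m + 1) → ZFSet) → ZFSet)
      (f : (Fin (n + 1) → ZFSet) → (Fin m → ZFSet) → ZFSet) :
      PCSF (n + 1) (m + 1) h →
      (∀ (x : ZFSet) (y : Fin n → ZFSet) (a : Fin m → ZFSet),
        f (Fin.cons x y) a =
          h (Fin.cons x y) (Fin.snoc a (zImage (fun z => f (Fin.cons z y) a) x))) →
      PCSF (n + 1) m f

/-- A relation is in `PCSF` iff its characteristic function
(`1 = {∅}` for true, `0 = ∅` for false) is in `PCSF`. -/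
def PCSFRel (n m : ℕ) (R : (Fin n → ZFSet) → (Fin m → ZFSet) → Prop) : Prop :=
  PCSF n m fun x a => if R x a then ({∅} : ZFSet) else ∅

/-! ## Transitive closure, hereditary finiteness -/

/-- Transitive closure `TC(x) = x ∪ ⋃{TC(y) : y ∈ x}` by ∈-recursion. -/
noncomputable def TCset : ZFSet → ZFSet :=
  ZFSet.mem_wf.fix fun x ih =>
    x ∪ ZFSet.sUnion (zImage (fun y => if h : y ∈ x then ih y h else ∅) x)

/-- A set is hereditarily finite iff its transitive closure is finite. -/
def IsHF (x : ZFSet) : Prop := (TCset x).toSet.Finite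

/-- `cT x` = cardinality of the transitive closure of `x`
(junk value `0` if infinite). -/
noncomputable def cT (x : ZFSet) : ℕ := (TCset x).toSet.ncard

/-- The finite union `A₁ ∪ ⋯ ∪ Aₘ`. -/
def unionFin {m : ℕ} (A : Fin m → ZFSet) : ZFSet :=
  (List.ofFn A).foldr (· ∪ ·) ∅

/-! ## The encoding ν of binary strings, application, product -/

/-- The von Neumann numeral 1 = {∅}. -/
def zOne : ZFSet := {∅}

/-- The von Neumann numeral 2 = {∅,{∅}}. -/
def zTwo : ZFSet := {∅, {∅}}

/-- The encoding of binary strings (head of the list = last appended bit):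
`ν(ε) = ∅` and `ν(s i) = ⟨i+1, ν s⟩`, a bit `i ∈ {0,1}` being represented
by the boolean `i = 1`. -/
def nu : List Bool → ZFSet
  | [] => ∅
  | b :: s => kpair (if b then zTwo else zOne) (nu s)

/-- `zApp b c = b'c = ⋃{d ∈ ⋃⋃b : ⟨c,d⟩ ∈ b}` (which is `⋃{d : ⟨c,d⟩ ∈ b}`,
since every such `d` belongs to `⋃⋃b`). -/
def zApp (b c : ZFSet) : ZFSet :=
  ZFSet.sUnion (ZFSet.sep (fun d => kpair c d ∈ b) (ZFSet.sUnion (ZFSet.sUnion b)))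

/-- Cartesian product `a × b = {⟨u,v⟩ : u ∈ a, v ∈ b}` (with Kuratowski pairs). -/
noncomputable def zProd (a b : ZFSet) : ZFSet :=
  ZFSet.sUnion (zImage (fun u => zImage (fun v => kpair u v) b) a)

/-! ## Polynomial time computability on binary strings -/

/-- The trivial encoding of binary strings over the alphabet `Bool`. -/
def boolListEncoding : Computability.Encoding (List Bool) Bool where
  encode := id
  decode := fun l => some l
  decode_encode := fun _ => rfl

/-- Encoding of a tuple of binary strings over the alphabet `Option Bool`:
the strings are listed in order, each terminated by the separator `none`. -/
def encTuple : (k : ℕ) → (Fin k → List Bool) → List (Option Bool)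
  | 0, _ => []
  | k + 1, v => (v 0).map some ++ none :: encTuple k (Fin.tail v)

/-- Splits off the first separator-terminated block. -/
def splitFirst : List (Option Bool) → List Bool × List (Option Bool)
  | [] => ([], [])
  | none :: l => ([], l)
  | some b :: l => ((splitFirst l).1.cons b, (splitFirst l).2)

theorem splitFirst_encode (s : List Bool) (rest : List (Option Bool)) :
    splitFirst (s.map some ++ none :: rest) = (s, rest) := by
  induction s with
  | nil => rfl
  | cons b s ih => simp [splitFirst, ih]

/-- Decoding of tuples of binary strings. -/
def decTuple : (k : ℕ) → List (Option Bool) → Option (Fin k → List Bool)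
  | 0, _ => some Fin.elim0
  | k + 1, l =>
    (decTuple k (splitFirst l).2).map fun v => Fin.cons (splitFirst l).1 v

theorem decTuple_encTuple : ∀ (k : ℕ) (v : Fin k → List Bool),
    decTuple k (encTuple k v) = some v := by
  intro k
  induction k with
  | zero =>
    intro v
    simp only [decTuple]
    congr
    exact funext fun i => i.elim0
  | succ k ih =>
    intro v
    simp [decTuple, encTuple, splitFirst_encode, ih (Fin.tail v), Fin.cons_self_tail]

/-- The standard encoding of tuples of binary strings. -/
def tupleEncoding (k : ℕ) : Computability.Encoding (Fin k → List Bool) (Option Bool) where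
  encode := encTuple k
  decode := decTuple k
  decode_encode := decTuple_encTuple k

/-- A function on tuples of binary strings is polynomial time computable iff
some two-stack machine computes it in polynomial time (Mathlib's notion). -/
def PolyTimeStringFun {k : ℕ} (f : (Fin k → List Bool) → List Bool) : Prop :=
  Nonempty (Turing.TM2ComputableInPolyTime (tupleEncoding k).encode boolListEncoding.encode f)

/-- Polynomial time computability for functions on ℕ,
with respect to the standard binary encoding of naturals. -/
def PolyTimeNatFun (f : ℕ → ℕ) : Prop :=
  Nonempty (Turing.TM2ComputableInPolyTime Computability.encodingNatBool.encode
    Computability.encodingNatBool.encode f)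

/-! ## A feasible encoding of lists of naturals by naturals -/

/-- Reads a list of bits (least significant first) as a natural number. -/
def bitsToNat (l : List Bool) : ℕ := l.foldr (fun b n => Nat.bit b n) 0

/-- A standard feasible (linear size) encoding of lists of natural numbers:
every bit of the binary expansion of an entry is escaped as `[false, b]`,
entries are terminated by `[true, true]`, and a final `true` protects
leading zeros. -/
def encodeNatList (l : List ℕ) : ℕ :=
  bitsToNat
    ((l.map fun n => (Nat.bits n).foldr (fun b acc => false :: b :: acc) [true, true]).foldr
        (· ++ ·) [true])

/-! ## Rooted DAGs encoding hereditarily finite sets -/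

/-- A rooted DAG: a finite set `V` of natural numbers, edges `E ⊆ V × V`
going strictly downwards, and a root `r ∈ V` which is the only node of
indegree zero. -/
structure RootedDag where
  V : Finset ℕ
  E : Finset (ℕ × ℕ)
  r : ℕ
  edge_mem : ∀ e ∈ E, e.1 ∈ V ∧ e.2 ∈ V
  root_mem : r ∈ V
  root_indeg : ∀ e ∈ E, e.2 ≠ r
  reach_nonroot : ∀ a ∈ V, a ≠ r → ∃ b ∈ V, (b, a) ∈ E
  desc : ∀ e ∈ E, e.2 < e.1

namespace RootedDag

/-- The children of a node. -/
def children (G : RootedDag) (a : ℕ) : Finset ℕ :=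
  (G.E.filter fun e => e.1 = a).image Prod.snd

theorem children_lt (G : RootedDag) {a b : ℕ} (h : b ∈ G.children a) : b < a := by
  simp only [children, Finset.mem_image, Finset.mem_filter] at h
  obtain ⟨e, ⟨heE, he1⟩, he2⟩ := h
  have := G.desc e heE
  omega

/-- The hereditarily finite set encoded at a node:
`set_G(a) = {set_G(b) : (a,b) ∈ E}`. -/
def setAt (G : RootedDag) (a : ℕ) : ZFSet.{0} :=
  (((G.children a).attach.toList).map fun b => G.setAt b.1).foldr insert ∅
termination_by a
decreasing_by exact G.children_lt b.2

/-- The hereditarily finite set encoded by a rooted DAG. -/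
def set (G : RootedDag) : ZFSet.{0} := G.setAt G.r

/-- A DAG is fully collapsed iff distinct nodes encode distinct sets. -/
def FullyCollapsed (G : RootedDag) : Prop :=
  ∀ a ∈ G.V, ∀ b ∈ G.V, G.setAt a = G.setAt b → a = b

/-- Reachability along edges. -/
def Reaches (G : RootedDag) (a b : ℕ) : Prop :=
  Relation.ReflTransGen (fun u v => (u, v) ∈ G.E) a b

/-- The node set of the sub-DAG `G|a` of nodes reachable from `a`. -/
noncomputable def reachSet (G : RootedDag) (a : ℕ) : Finset ℕ :=
  G.V.filter fun b => G.Reaches a b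

/-- A DAG is balanced iff each node `a` is at most the number of nodes of `G|a`. -/
def Balanced (G : RootedDag) : Prop :=
  ∀ a ∈ G.V, a ≤ (G.reachSet a).card

end RootedDag

/-- The numeric code `⌈G⌉` of a rooted DAG: the code of the triple consisting
of (the code of) the sorted list of vertices, (the code of) the sorted list of
pair-coded edges, and the root. -/
noncomputable def RootedDag.code (G : RootedDag) : ℕ :=
  encodeNatList [encodeNatList (G.V.sort (· ≤ ·)),
    encodeNatList ((G.E.image fun e => Nat.pair e.1 e.2).sort (· ≤ ·)), G.r]

/-- The finite set `{l₀, …, l_{n-1}}` as a ZF-set. -/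
def zSetOfList (l : List ZFSet) : ZFSet := l.foldr insert ∅

/-! A predicative recursion on `x` can evaluate `h` only at the recursion argument itself, never at
its elements.  So the recursion instead collects the graph `{⟨z, h(z,ȳ/ā)⟩ : z ∈ TC({x}), R(z,ȳ/ā)}`
of `h` along the whole ∈-history of `x`.  The bounded replacement is the image of `x` under this
graph, which is obtained from it by two safe separations (over `⋃⋃` of the graph and over `x`),
hence by a `PCSF⁻` function; the bounded union is one more `⋃`. -/

open scoped ZFSet

theorem mem_zImage {f : ZFSet → ZFSet} {x y : ZFSet} : y ∈ zImage f x ↔ ∃ z ∈ x, f z = y :=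
  @ZFSet.mem_image f (Classical.allZFSetDefinable _) x y

theorem zImage_congr {f g : ZFSet → ZFSet} {x : ZFSet} (h : ∀ z ∈ x, f z = g z) :
    zImage f x = zImage g x :=
  ZFSet.ext fun y => by
    simp only [mem_zImage]
    exact exists_congr fun z => and_congr_right fun hz => by rw [h z hz]

theorem sep_ne_empty_iff {p : ZFSet → Prop} {x : ZFSet} : ZFSet.sep p x ≠ ∅ ↔ ∃ z ∈ x, p z := by
  simp [Ne, ZFSet.eq_empty]

theorem ite_singleton_empty_ne_empty {P : Prop} :
    (if P then ({∅} : ZFSet) else ∅) ≠ ∅ ↔ P := by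
  split_ifs with hP
  · exact iff_of_true (fun h => ZFSet.not_nonempty_empty (h ▸ ZFSet.singleton_nonempty ∅)) hP
  · exact iff_of_false (not_not_intro rfl) hP

def zRelImage (F c : ZFSet) : ZFSet :=
  ZFSet.sep (fun d => ∃ z ∈ c, kpair z d ∈ F) (⋃₀ ⋃₀ F)

theorem mem_zRelImage {F c d : ZFSet} : d ∈ zRelImage F c ↔ ∃ z ∈ c, kpair z d ∈ F := by
  refine ZFSet.mem_sep.trans ⟨And.right, fun hd => ⟨?_, hd⟩⟩
  obtain ⟨z, -, hzd⟩ := hd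
  exact ZFSet.mem_sUnion_of_mem (ZFSet.mem_insert_of_mem _ (ZFSet.mem_singleton.2 rfl))
    (ZFSet.mem_sUnion_of_mem (ZFSet.mem_insert_of_mem _ (ZFSet.mem_singleton.2 rfl)) hzd)

namespace PCSFminus

variable {m : ℕ} {f g c d : (Fin m → ZFSet) → ZFSet}

theorem of_eq (hf : PCSFminus m f) (h : ∀ a, f a = g a) : PCSFminus m g :=
  funext h ▸ hf

theorem const_empty : PCSFminus m fun _ => ∅ :=
  comp _ Fin.elim0 null fun i => i.elim0

theorem pairing (hf : PCSFminus m f) (hg : PCSFminus m g) :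
    PCSFminus m fun a => {f a, g a} :=
  comp _ ![f, g] pair fun i => by fin_cases i <;> assumption

theorem singleton (hf : PCSFminus m f) : PCSFminus m fun a => {f a} :=
  (hf.pairing hf).of_eq fun a => ZFSet.ext fun w => by simp

theorem kpair (hf : PCSFminus m f) (hg : PCSFminus m g) :
    PCSFminus m fun a => PCSFPaper.kpair (f a) (g a) :=
  hf.singleton.pairing (hf.pairing hg)

theorem sUnion (hf : PCSFminus m f) : PCSFminus m fun a => ⋃₀ f a :=
  comp _ ![f] union fun i => by fin_cases i; assumption

theorem binUnion (hf : PCSFminus m f) (hg : PCSFminus m g) : PCSFminus m fun a => f a ∪ g a :=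
  (hf.pairing hg).sUnion

theorem ite_mem (hf : PCSFminus m f) (hg : PCSFminus m g) (hc : PCSFminus m c)
    (hd : PCSFminus m d) : PCSFminus m fun a => if c a ∈ d a then f a else g a :=
  comp _ ![f, g, c, d] cond fun i => by fin_cases i <;> assumption

theorem comp_init (hf : PCSFminus m f) : PCSFminus (m + 1) fun a => f (Fin.init a) :=
  comp _ _ hf fun i => proj i.castSucc

theorem sep_ne_empty {H : (Fin (m + 1) → ZFSet) → ZFSet} (hH : PCSFminus (m + 1) H)
    (hc : PCSFminus m c) :
    PCSFminus m fun a => ZFSet.sep (fun b => H (Fin.snoc a b) ≠ ∅) (c a) := by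
  refine (comp _ (Fin.snoc (fun j a => a j) c) (sep H hH) fun i => ?_).of_eq fun a => ?_
  · refine Fin.lastCases ?_ (fun j => ?_) i
    · simpa using hc
    · simpa using proj j
  · have hv : (fun i => Fin.snoc (α := fun _ => (Fin m → ZFSet) → ZFSet) (fun j a => a j) c i a) =
        Fin.snoc a (c a) := by
      funext i
      refine Fin.lastCases ?_ (fun j => ?_) i <;> simp
    simp only [hv, Fin.init_snoc, Fin.snoc_last]

theorem zRelImage {F : (Fin m → ZFSet) → ZFSet} (hF : PCSFminus m F) (hc : PCSFminus m c) :
    PCSFminus m fun a => PCSFPaper.zRelImage (F a) (c a) := by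
  -- the two extra arguments play `d` and then `z`
  have hmem : PCSFminus (m + 2) fun a =>
      if PCSFPaper.kpair (a (Fin.last _)) (a (Fin.last m).castSucc) ∈ F (Fin.init (Fin.init a))
      then ({∅} : ZFSet) else ∅ :=
    const_empty.singleton.ite_mem const_empty ((proj _).kpair (proj _)) hF.comp_init.comp_init
  have hfiber : PCSFminus (m + 1) fun a =>
      ZFSet.sep (fun z => PCSFPaper.kpair z (a (Fin.last m)) ∈ F (Fin.init a)) (c (Fin.init a)) :=
    (hmem.sep_ne_empty hc.comp_init).of_eq fun a => by
      simp only [ite_singleton_empty_ne_empty, Fin.snoc_last, Fin.snoc_castSucc, Fin.init_snoc]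
  refine (hfiber.sep_ne_empty hF.sUnion.sUnion).of_eq fun a => ?_
  simp only [Fin.snoc_last, Fin.init_snoc, sep_ne_empty_iff, PCSFPaper.zRelImage]

end PCSFminus

/-- `graphBelow P H x = {⟨z, H z⟩ : z ∈ TC({x}), P z}`. -/
noncomputable def graphBelow (P : ZFSet → Prop) (H : ZFSet → ZFSet) : ZFSet → ZFSet :=
  ZFSet.mem_wf.fix fun x ih =>
    (if P x then {kpair x (H x)} else ∅) ∪ ⋃₀ zImage (fun z => if hz : z ∈ x then ih z hz else ∅) x

section graphBelow

variable {P : ZFSet → Prop} {H : ZFSet → ZFSet}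

theorem graphBelow_eq (x : ZFSet) :
    graphBelow P H x = (if P x then {kpair x (H x)} else ∅) ∪ ⋃₀ zImage (graphBelow P H) x := by
  rw [graphBelow, WellFounded.fix_eq]
  congr 2
  exact zImage_congr fun z hz => dif_pos hz

theorem kpair_mem_graphBelow {x z : ZFSet} (hz : z ∈ x) (hP : P z) :
    kpair z (H z) ∈ graphBelow P H x := by
  rw [graphBelow_eq, ZFSet.mem_union, ZFSet.mem_sUnion]
  refine Or.inr ⟨graphBelow P H z, mem_zImage.2 ⟨z, hz, rfl⟩, ?_⟩
  rw [graphBelow_eq, if_pos hP]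
  exact ZFSet.mem_union.2 (Or.inl (ZFSet.mem_singleton.2 rfl))

theorem exists_eq_kpair_of_mem_graphBelow {x e : ZFSet} (he : e ∈ graphBelow P H x) :
    ∃ z, P z ∧ e = kpair z (H z) := by
  induction x using ZFSet.inductionOn with
  | h x ih =>
    rw [graphBelow_eq, ZFSet.mem_union, ZFSet.mem_sUnion] at he
    rcases he with he | ⟨_, hy, he⟩
    · split_ifs at he with hP
      · exact ⟨x, hP, ZFSet.mem_singleton.1 he⟩
      · exact absurd he (ZFSet.notMem_empty e)
    · obtain ⟨z, hz, rfl⟩ := mem_zImage.1 hy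
      exact ih z hz he

theorem zRelImage_graphBelow (x : ZFSet) :
    zRelImage (graphBelow P H x) x = zImage H (ZFSet.sep P x) := by
  refine ZFSet.ext fun d => ?_
  rw [mem_zRelImage, mem_zImage]
  constructor
  · rintro ⟨z, hz, hzd⟩
    obtain ⟨w, hw, hzw⟩ := exists_eq_kpair_of_mem_graphBelow hzd
    obtain ⟨rfl, rfl⟩ := ZFSet.pair_injective hzw
    exact ⟨z, ZFSet.mem_sep.2 ⟨hz, hw⟩, rfl⟩
  · rintro ⟨z, hz, rfl⟩
    obtain ⟨hzx, hP⟩ := ZFSet.mem_sep.1 hz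
    exact ⟨z, hzx, kpair_mem_graphBelow hzx hP⟩

end graphBelow

namespace PCSF

variable {n m : ℕ} {f g : (Fin n → ZFSet) → (Fin m → ZFSet) → ZFSet}

theorem of_eq (hf : PCSF n m f) (h : ∀ x a, f x a = g x a) : PCSF n m g :=
  funext (fun x => funext (h x)) ▸ hf

theorem comp_minus {l : ℕ} {Φ : (Fin l → ZFSet) → ZFSet} (hΦ : PCSFminus l Φ)
    {t : Fin l → (Fin n → ZFSet) → (Fin m → ZFSet) → ZFSet} (ht : ∀ i, PCSF n m (t i)) :
    PCSF n m fun x a => Φ fun i => t i x a :=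
  comp (fun _ a => Φ a) (fun i => i.elim0) t (ofMinus Φ hΦ) (fun i => i.elim0) ht

theorem proj_normal (j : Fin n) : PCSF n m fun x _ => x j :=
  (proj (Fin.castAdd m j)).of_eq fun x a => Fin.append_left x a j

theorem proj_safe (j : Fin m) : PCSF n m fun _ a => a j :=
  (proj (Fin.natAdd n j)).of_eq fun x a => Fin.append_right x a j

theorem comp_init_safe (hf : PCSF n m f) : PCSF n (m + 1) fun x a => f x (Fin.init a) :=
  comp f (fun i x _ => x i) (fun i _ a => a i.castSucc) hf proj_normal
    fun i => proj_safe i.castSucc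

theorem sUnion (hf : PCSF n m f) : PCSF n m fun x a => ⋃₀ f x a :=
  comp_minus PCSFminus.union (t := ![f]) fun i => by fin_cases i; exact hf

theorem zRelImage (hf : PCSF n m f) (hg : PCSF n m g) :
    PCSF n m fun x a => PCSFPaper.zRelImage (f x a) (g x a) :=
  comp_minus ((PCSFminus.proj 0).zRelImage (.proj 1)) (t := ![f, g]) fun i => by
    fin_cases i <;> assumption

theorem graphBelow {h : (Fin (n + 1) → ZFSet) → (Fin m → ZFSet) → ZFSet}
    {R : (Fin (n + 1) → ZFSet) → (Fin m → ZFSet) → Prop}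
    (hh : PCSF (n + 1) m h) (hR : PCSFRel (n + 1) m R) :
    PCSF (n + 1) m fun x a => PCSFPaper.graphBelow (fun z => R (Fin.cons z (Fin.tail x)) a)
      (fun z => h (Fin.cons z (Fin.tail x)) a) (x 0) := by
  -- `a 1` will be `χ_R`, which contains `∅` iff `R` holds
  have hstep : PCSFminus 4 fun a =>
      (if ∅ ∈ a 1 then {kpair (a 0) (a 2)} else ∅) ∪ ⋃₀ a 3 :=
    (((PCSFminus.proj 0).kpair (.proj 2)).singleton.ite_mem .const_empty .const_empty
      (.proj 1)).binUnion (PCSFminus.proj 3).sUnion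
  refine recur _ _ (comp_minus hstep (t := ![fun x _ => x 0,
    fun x a => if R x (Fin.init a) then {∅} else ∅, fun x a => h x (Fin.init a),
    fun _ a => a (Fin.last m)]) fun i => ?_) fun x y a => ?_
  · fin_cases i
    exacts [proj_normal 0, comp_init_safe hR, comp_init_safe hh, proj_safe _]
  · rw [PCSFPaper.graphBelow_eq]
    by_cases hr : R (Fin.cons x y) a <;> simp [hr]

end PCSF

/-- Bounded union and bounded replacement over a `PCSF`
relation: `f(x,ȳ/ā) = ⋃{h(z,ȳ/ā) : z ∈ x, R(z,ȳ/ā)}` and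
`g(x,ȳ/ā) = {h(z,ȳ/ā) : z ∈ x, R(z,ȳ/ā)}` are in `PCSF`. -/
theorem pcsf_bounded_union_sep {n m : ℕ}
    (h : (Fin (n + 1) → ZFSet) → (Fin m → ZFSet) → ZFSet)
    (R : (Fin (n + 1) → ZFSet) → (Fin m → ZFSet) → Prop)
    (hh : PCSF (n + 1) m h) (hR : PCSFRel (n + 1) m R) :
    PCSF (n + 1) m (fun x a =>
      ZFSet.sUnion (zImage (fun z => h (Fin.cons z (Fin.tail x)) a)
        (ZFSet.sep (fun z => R (Fin.cons z (Fin.tail x)) a) (x 0)))) ∧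
    PCSF (n + 1) m (fun x a =>
      zImage (fun z => h (Fin.cons z (Fin.tail x)) a)
        (ZFSet.sep (fun z => R (Fin.cons z (Fin.tail x)) a) (x 0))) := by
  have himage := ((PCSF.graphBelow hh hR).zRelImage (PCSF.proj_normal 0)).of_eq
    fun x a => zRelImage_graphBelow (x 0)
  exact ⟨himage.sUnion, himage⟩

end PCSFPaper
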